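/- Let X ⊆ ℝ^d be a compact symmetric set (X = −X) containing 0 in its interior, with Lebesgue-negligible boundary. Let h : (ℝ^d)^k → ℝ be nonnegative, measurable, and stationary (h(t_1+t, …, t_k+t) = h(t_1, …, t_k) for all t ∈ ℝ^d), and let h̄(s_1, …, s_{k−1}) = h(0, s_1, …, s_{k−1}). If h̄ ∈ L^p((ℝ^d)^{k−1}) for some p ≥ 1, then ‖h‖^p_{L^p((λX)^k)} / λ^d → ℓ(X) · ‖h̄‖^p_{L^p((ℝ^d)^{k−1})} as λ → ∞, where ℓ denotes Lebesgue measure. -/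

import Mathlib

open MeasureTheory
open scoped Pointwise

open Filter Topology Set Module

/-!
In the coordinates `x₀ = λt`, `xᵢ = λt + sᵢ`, stationarity turns `h(x)^p` into `h̄(s)^p` and the
Jacobian is `λ^d`, so the normalised integral equals `∫ 1[t ∈ X, t + sᵢ/λ ∈ X] h̄(s)^p dt ds`.
The indicator tends to `1` when `t` lies in the interior of `X`, vanishes when `t ∉ X`, and the
frontier of `X` is null; dominated convergence with the bound `1_X(t) h̄(s)^p` gives the limit
`ℓ(X) ‖h̄‖ₚᵖ`.
-/

namespace StationaryKernel

section RelativeCoordinates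

variable {E : Type*} [AddCommGroup E] [MeasurableSpace E] [MeasurableAdd₂ E] [MeasurableSub₂ E]
  {k : ℕ}

variable (E k) in
def relCoords : E × (Fin k → E) ≃ᵐ (Fin (k + 1) → E) :=
  ({ toFun := fun q => (q.1, fun i => q.2 i + q.1)
     invFun := fun q => (q.1, fun i => q.2 i - q.1)
     left_inv := fun q => by ext <;> simp
     right_inv := fun q => by ext <;> simp
     measurable_toFun := measurable_fst.prodMk <| measurable_pi_lambda _ fun i =>
       ((measurable_pi_apply i).comp measurable_snd).add measurable_fst
     measurable_invFun := measurable_fst.prodMk <| measurable_pi_lambda _ fun i =>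
       ((measurable_pi_apply i).comp measurable_snd).sub measurable_fst } :
      E × (Fin k → E) ≃ᵐ E × (Fin k → E)).trans
    (MeasurableEquiv.piFinSuccAbove (fun _ => E) 0).symm

theorem relCoords_apply (t : E) (s : Fin k → E) :
    relCoords E k (t, s) = Fin.cons t (fun i => s i + t) := by
  simp [relCoords, MeasurableEquiv.piFinSuccAbove_symm_apply, Fin.insertNthEquiv,
    Fin.insertNth_zero']

theorem measurePreserving_relCoords (μ : Measure E) [SigmaFinite μ] [μ.IsAddRightInvariant] :
    MeasurePreserving (relCoords E k) (μ.prod (Measure.pi fun _ => μ))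
      (Measure.pi fun _ => μ) :=
  (MeasurePreserving.skew_product (g := fun t s => s + Function.const _ t)
    (MeasurePreserving.id μ) (by fun_prop)
    (Eventually.of_forall fun t => map_add_right_eq_self _ (Function.const _ t))).trans
    (measurePreserving_piFinSuccAbove (fun _ => μ) 0).symm

theorem apply_relCoords_of_stationary {β : Type*} {F : (Fin (k + 1) → E) → β}
    (hF : ∀ (t : E) (x : Fin (k + 1) → E), F (fun i => x i + t) = F x) (t : E)
    (s : Fin k → E) : F (relCoords E k (t, s)) = F (Fin.cons 0 s) := by
  rw [relCoords_apply, ← hF t (Fin.cons 0 s)]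
  congr 1
  ext i
  cases i using Fin.cases <;> simp

end RelativeCoordinates

section Window

variable {E : Type*} [NormedAddCommGroup E] [NormedSpace ℝ E] {k : ℕ}

/-- The cube `(λX)^(k+1)` in the coordinates `(t, s) ↦ (λt, λt + s₁, …, λt + sₖ)`,
see `relCoords_smul_fst_mem_univ_pi_iff`. -/
def relWindow (X : Set E) (k : ℕ) (lam : ℝ) : Set (E × (Fin k → E)) :=
  {q | q.1 ∈ X ∧ ∀ i, q.1 + lam⁻¹ • q.2 i ∈ X}

theorem measurableSet_relWindow [MeasurableSpace E] [BorelSpace E] [SecondCountableTopology E]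
    {X : Set E} (hX : MeasurableSet X) (lam : ℝ) : MeasurableSet (relWindow X k lam) := by
  rw [relWindow, ofPred_and, ofPred_forall]
  exact (measurable_fst hX).inter <| MeasurableSet.iInter fun i =>
    (show Measurable fun q : E × (Fin k → E) => q.1 + lam⁻¹ • q.2 i by fun_prop) hX

theorem relWindow_subset_prod (X : Set E) (lam : ℝ) : relWindow X k lam ⊆ X ×ˢ univ :=
  fun _ hq => ⟨hq.1, trivial⟩

theorem eventually_mem_relWindow {X : Set E} {q : E × (Fin k → E)} (hq : q.1 ∈ interior X) :
    ∀ᶠ lam in atTop, q ∈ relWindow X k lam := by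
  have hi : ∀ i, ∀ᶠ lam : ℝ in atTop, q.1 + lam⁻¹ • q.2 i ∈ X := fun i => by
    have : Tendsto (fun lam : ℝ => q.1 + lam⁻¹ • q.2 i) atTop (𝓝 (q.1 + (0 : ℝ) • q.2 i)) :=
      tendsto_const_nhds.add (tendsto_inv_atTop_zero.smul_const _)
    rw [zero_smul, add_zero] at this
    exact this.eventually (mem_interior_iff_mem_nhds.mp hq)
  filter_upwards [eventually_all.2 hi] with lam hlam using ⟨interior_subset hq, hlam⟩

theorem tendsto_indicator_relWindow {X : Set E} {q : E × (Fin k → E)} (hq : q.1 ∉ frontier X)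
    {β : Type*} [TopologicalSpace β] [Zero β] (g : E × (Fin k → E) → β) :
    Tendsto (fun lam => (relWindow X k lam).indicator g q) atTop
      (𝓝 ((X ×ˢ univ).indicator g q)) := by
  by_cases hqX : q.1 ∈ X
  · have hqi : q.1 ∈ interior X := by_contra fun h => hq ⟨subset_closure hqX, h⟩
    rw [indicator_of_mem (show q ∈ X ×ˢ univ from ⟨hqX, trivial⟩)]
    refine tendsto_const_nhds.congr' ?_
    filter_upwards [eventually_mem_relWindow hqi] with lam hlam
    rw [indicator_of_mem hlam]
  · have hq' : q ∉ X ×ˢ univ := fun h => hqX h.1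
    simp only [indicator_of_notMem hq',
      indicator_of_notMem fun h => hq' (relWindow_subset_prod X _ h)]
    exact tendsto_const_nhds

theorem tendsto_integral_indicator_relWindow [MeasurableSpace E] [BorelSpace E]
    [SecondCountableTopology E] {μ : Measure E} [SFinite μ] {ν : Measure (Fin k → E)} [SFinite ν]
    {X : Set E} (hX : MeasurableSet X) (hXfin : μ X ≠ ⊤) (hXb : μ (frontier X) = 0)
    {G : (Fin k → E) → ℝ} (hG : Integrable G ν) :
    Tendsto (fun lam => ∫ q, (relWindow X k lam).indicator (fun q => G q.2) q ∂μ.prod ν) atTop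
      (𝓝 (μ.real X * ∫ s, G s ∂ν)) := by
  have : IsFiniteMeasure (μ.restrict X) := isFiniteMeasure_restrict.2 hXfin
  have hprod : (μ.prod ν).restrict (X ×ˢ univ) = (μ.restrict X).prod ν := by
    rw [← Measure.prod_restrict, Measure.restrict_univ]
  have hlim :
      ∫ q, (X ×ˢ univ).indicator (fun q => G q.2) q ∂μ.prod ν = μ.real X * ∫ s, G s ∂ν := by
    rw [integral_indicator (hX.prod MeasurableSet.univ), hprod, integral_fun_snd,
      measureReal_restrict_apply_univ, smul_eq_mul]
  rw [← hlim]
  refine tendsto_integral_filter_of_dominated_convergence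
    ((X ×ˢ univ).indicator fun q => ‖G q.2‖) ?_ ?_ ?_ ?_
  · exact Eventually.of_forall fun lam =>
      hG.aestronglyMeasurable.comp_snd.indicator (measurableSet_relWindow hX lam)
  · refine Eventually.of_forall fun lam => Eventually.of_forall fun q => ?_
    rw [norm_indicator_eq_indicator_norm]
    exact indicator_le_indicator_of_subset (relWindow_subset_prod X lam)
      (fun _ => norm_nonneg _) q
  · rw [integrable_indicator_iff (hX.prod MeasurableSet.univ), IntegrableOn, hprod]
    exact hG.norm.comp_snd _
  · have hfront : ∀ᵐ q ∂μ.prod ν, q.1 ∉ frontier X :=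
      Measure.quasiMeasurePreserving_fst.ae (measure_eq_zero_iff_ae_notMem.1 hXb)
    filter_upwards [hfront] with q hq using tendsto_indicator_relWindow hq _

end Window

section Haar

variable {E : Type*} [NormedAddCommGroup E] [NormedSpace ℝ E] [FiniteDimensional ℝ E]
  [MeasurableSpace E] [BorelSpace E] {k : ℕ}

theorem relCoords_smul_fst_mem_univ_pi_iff {X : Set E} {lam : ℝ} (hlam : lam ≠ 0)
    (q : E × (Fin k → E)) :
    relCoords E k (lam • q.1, q.2) ∈ univ.pi (fun _ => lam • X) ↔ q ∈ relWindow X k lam := by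
  rw [relCoords_apply, mem_univ_pi, Fin.forall_fin_succ]
  simp only [Fin.cons_zero, Fin.cons_succ, relWindow, mem_ofPred_eq,
    smul_mem_smul_set_iff₀ hlam, mem_smul_set_iff_inv_smul_mem₀ hlam, smul_add, smul_smul,
    inv_mul_cancel₀ hlam, one_smul, add_comm]

variable (μ : Measure E) [μ.IsAddHaarMeasure]

theorem integral_comp_smul_fst {β : Type*} [MeasurableSpace β] (ν : Measure β) [SFinite ν]
    {G : Type*} [NormedAddCommGroup G] [NormedSpace ℝ G] (F : E × β → G) {c : ℝ} (hc : c ≠ 0) :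
    ∫ q, F (c • q.1, q.2) ∂μ.prod ν = |c ^ finrank ℝ E|⁻¹ • ∫ q, F q ∂μ.prod ν := by
  let e := (MeasurableEquiv.smul₀ (α := E) c hc).prodCongr (MeasurableEquiv.refl β)
  have hmap : (μ.prod ν).map e = ENNReal.ofReal |c ^ finrank ℝ E|⁻¹ • μ.prod ν := by
    rw [show ⇑e = Prod.map (fun x : E => c • x) id from rfl,
      ← Measure.map_prod_map _ _ (measurable_const_smul c) measurable_id,
      Measure.map_addHaar_smul μ hc, Measure.map_id, Measure.prod_smul_left, abs_inv]
  calc ∫ q, F (c • q.1, q.2) ∂μ.prod ν = ∫ q, F (e q) ∂μ.prod ν := rfl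
    _ = |c ^ finrank ℝ E|⁻¹ • ∫ q, F q ∂μ.prod ν := by
      rw [← integral_map_equiv e F, hmap, integral_smul_measure,
        ENNReal.toReal_ofReal (by positivity)]

theorem setIntegral_univ_pi_smul_div_pow {F : (Fin (k + 1) → E) → ℝ}
    (hF : ∀ (t : E) (x : Fin (k + 1) → E), F (fun i => x i + t) = F x) {X : Set E}
    (hX : MeasurableSet X) {lam : ℝ} (hlam : 0 < lam) :
    (∫ x in univ.pi (fun _ => lam • X), F x ∂Measure.pi fun _ => μ) / lam ^ finrank ℝ E =
      ∫ q, (relWindow X k lam).indicator (fun q => F (Fin.cons 0 q.2)) q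
        ∂μ.prod (Measure.pi fun _ => μ) := by
  set S := univ.pi fun _ : Fin (k + 1) => lam • X
  have hS : MeasurableSet S := .univ_pi fun _ => hX.const_smul₀ lam
  have hpoint : ∀ q : E × (Fin k → E), S.indicator F (relCoords E k (lam • q.1, q.2)) =
      (relWindow X k lam).indicator (fun q => F (Fin.cons 0 q.2)) q := fun q => by
    by_cases hq : q ∈ relWindow X k lam
    · rw [indicator_of_mem ((relCoords_smul_fst_mem_univ_pi_iff hlam.ne' q).2 hq),
        indicator_of_mem hq, apply_relCoords_of_stationary hF]
    · rw [indicator_of_notMem (mt (relCoords_smul_fst_mem_univ_pi_iff hlam.ne' q).1 hq),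
        indicator_of_notMem hq]
  rw [← integral_indicator hS, ← (measurePreserving_relCoords μ).integral_comp',
    div_eq_iff (by positivity), ← funext hpoint,
    integral_comp_smul_fst μ _ (fun q => S.indicator F (relCoords E k q)) hlam.ne',
    abs_of_pos (by positivity), smul_eq_mul, mul_comm, mul_inv_cancel_left₀ (by positivity)]

end Haar

end StationaryKernel

theorem stmt_2_general (d k p : ℕ)
    (X : Set (Fin d → ℝ)) (hXc : IsCompact X) (hXb : volume (frontier X) = 0)
    (h : (Fin (k + 1) → (Fin d → ℝ)) → ℝ)
    (hstat : ∀ (t : Fin d → ℝ) (x : Fin (k + 1) → (Fin d → ℝ)),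
      h (fun i => x i + t) = h x)
    (hint : Integrable (fun s : Fin k → (Fin d → ℝ) => h (Fin.cons 0 s) ^ p)) :
    Filter.Tendsto
      (fun lam : ℝ =>
        (∫ x in Set.univ.pi (fun _ : Fin (k + 1) => lam • X), h x ^ p) / lam ^ d)
      Filter.atTop
      (nhds ((volume X).toReal * ∫ s : Fin k → (Fin d → ℝ), h (Fin.cons 0 s) ^ p)) := by
  have hX := hXc.isClosed.measurableSet
  refine (StationaryKernel.tendsto_integral_indicator_relWindow hX hXc.measure_lt_top.ne hXb
    hint).congr' ?_
  filter_upwards [eventually_gt_atTop 0] with lam hlam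
  have hcoords := StationaryKernel.setIntegral_univ_pi_smul_div_pow volume
    (F := fun x => h x ^ p) (fun t x => congrArg (· ^ p) (hstat t x)) hX hlam
  rw [Module.finrank_fin_fun] at hcoords
  exact hcoords.symm

/-- asymptotics of the `L^p` norm of a stationary kernel restricted to
`(λX)^k`, formula (4.23) of Lemma 4.9 (without marks).  Here the kernel `h` has
`k + 1` variables and `h̄(s) = h(0, s)`. -/
theorem stmt_2 (d k p : ℕ) (hd : 1 ≤ d) (hp : 1 ≤ p)
    (X : Set (Fin d → ℝ)) (hXc : IsCompact X) (hXsym : X = -X)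
    (hX0 : (0 : Fin d → ℝ) ∈ interior X) (hXb : volume (frontier X) = 0)
    (h : (Fin (k + 1) → (Fin d → ℝ)) → ℝ) (hmeas : Measurable h) (hpos : ∀ x, 0 ≤ h x)
    (hstat : ∀ (t : Fin d → ℝ) (x : Fin (k + 1) → (Fin d → ℝ)),
      h (fun i => x i + t) = h x)
    (hint : Integrable (fun s : Fin k → (Fin d → ℝ) => h (Fin.cons 0 s) ^ p)) :
    Filter.Tendsto
      (fun lam : ℝ =>
        (∫ x in Set.univ.pi (fun _ : Fin (k + 1) => lam • X), h x ^ p) / lam ^ d)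
      Filter.atTop
      (nhds ((volume X).toReal * ∫ s : Fin k → (Fin d → ℝ), h (Fin.cons 0 s) ^ p)) :=
  stmt_2_general d k p X hXc hXb h hstat hint
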